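/- arXiv:2501.06672 — 2 statements merged into one kernel-verified Lean document; each statement's English description precedes it below -/
import Mathlib

section
/- Fix 0 < k < 1 and T > 0, let α_k(t) = 1 + k t, and let Q̂ = {(x,t) ∈ ℝ² : 0 < t < T, 0 < x < α_k(t)}. Assume T > (exp(2k(1+k)/(1−k)³) − 1)/k. Let φ : ℝ² → ℝ be of class C². If φ satisfies the wave equation ∂²φ/∂t² (x,t) = ∂²φ/∂x² (x,t) for all (x,t) ∈ Q̂, the homogeneous Dirichlet conditions φ(0,t) = 0 and φ(α_k(t), t) = 0 for all t ∈ [0,T], and the additional Neumann condition ∂φ/∂x (0,t) = 0 for all t ∈ (0,T), then φ(x,t) = 0 for all (x,t) ∈ Q̂. -/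
/-!
The Riemann invariants `φₜ + φₓ` and `φₜ - φₓ` of a solution of the wave equation are
constant along the characteristics `x + t = c` and `x - t = c` respectively, also up to the
lateral boundary by continuity of the second derivatives. Both vanish on the fixed endpoint,
where `φ = φₓ = 0`. On the moving endpoint the Dirichlet condition gives
`(1 + k) (φₜ + φₓ) + (1 - k) (φₜ - φₓ) = 2 (k φₓ + φₜ) = 0`, so there one invariant vanishes
iff the other does. Every characteristic through a point of `Q̂` reaches the fixed endpoint either
directly or after one reflection at the moving endpoint, and it does so before time `T` because
the time condition implies `(1 - k) T > 2`. Hence `∇φ = 0` in `Q̂`, and `φ = 0`.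
-/

open Set

section Segment

variable {E F : Type*} [NormedAddCommGroup E] [NormedSpace ℝ E]
  [NormedAddCommGroup F] [NormedSpace ℝ F]

theorem eq_of_hasFDerivAt_of_apply_sub_eq_zero {f : E → F} {f' : E → E →L[ℝ] F} {x y : E}
    (hf : ∀ z ∈ segment ℝ x y, HasFDerivAt f (f' z) z)
    (h : ∀ z ∈ segment ℝ x y, f' z (y - x) = 0) : f y = f x := by
  have hmem : ∀ σ ∈ Icc (0 : ℝ) 1, x + σ • (y - x) ∈ segment ℝ x y := fun σ hσ => by
    rw [segment_eq_image']; exact ⟨σ, hσ, rfl⟩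
  have hg : ∀ σ ∈ Icc (0 : ℝ) 1,
      HasDerivAt (fun σ : ℝ => f (x + σ • (y - x))) 0 σ := fun σ hσ => by
    have hline := ((hasDerivAt_id σ).smul_const (y - x)).const_add x
    have hcomp := (hf _ (hmem σ hσ)).comp_hasDerivAt σ hline
    rwa [one_smul, h _ (hmem σ hσ)] at hcomp
  have hconst := constant_of_has_deriv_right_zero
    (fun σ hσ => (hg σ hσ).continuousAt.continuousWithinAt)
    (fun σ hσ => (hg σ (Ico_subset_Icc_self hσ)).hasDerivWithinAt) 1
    (right_mem_Icc.2 zero_le_one)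
  simpa using hconst

end Segment

theorem HasDerivAt.eq_zero_of_eqOn_Ioo {g : ℝ → ℝ} {g' a b s : ℝ} (hg : HasDerivAt g g' s)
    (hs : s ∈ Ioo a b) (h : ∀ u ∈ Ioo a b, g u = 0) : g' = 0 :=
  hg.unique ((hasDerivAt_const s 0).congr_of_eventuallyEq
    (Filter.eventually_of_mem (Ioo_mem_nhds hs.1 hs.2) h))

theorem ContinuousLinearMap.apply_prod_eq {F : Type*} [NormedAddCommGroup F] [NormedSpace ℝ F]
    (L : ℝ × ℝ →L[ℝ] F) (a b : ℝ) : L (a, b) = a • L (1, 0) + b • L (0, 1) := by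
  rw [← map_smul, ← map_smul, ← map_add]; simp

theorem ContinuousLinearMap.eq_zero_of_apply_one_zero_of_apply_zero_one {F : Type*}
    [NormedAddCommGroup F] [NormedSpace ℝ F] (L : ℝ × ℝ →L[ℝ] F) (h₁ : L (1, 0) = 0)
    (h₂ : L (0, 1) = 0) : L = 0 :=
  ext fun ⟨a, b⟩ => by
    rw [apply_prod_eq, h₁, h₂, smul_zero, smul_zero, add_zero, zero_apply]

theorem ContinuousLinearMap.eq_zero_of_apply_one_one_of_apply_neg_one_one
    (L : ℝ × ℝ →L[ℝ] ℝ) (h₁ : L (1, 1) = 0) (h₂ : L (-1, 1) = 0) : L = 0 := by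
  rw [apply_prod_eq, smul_eq_mul, smul_eq_mul] at h₁ h₂
  exact L.eq_zero_of_apply_one_zero_of_apply_zero_one (by linarith) (by linarith)

theorem ContinuousLinearMap.one_add_mul_apply_add_one_sub_mul_apply (L : ℝ × ℝ →L[ℝ] ℝ)
    (k : ℝ) : (1 + k) * L (1, 1) + (1 - k) * L (-1, 1) = 2 * L (k, 1) := by
  rw [apply_prod_eq L 1 1, apply_prod_eq L (-1) 1, apply_prod_eq L k 1]
  simp only [smul_eq_mul]
  ring

section Partials

variable {F : Type*} [NormedAddCommGroup F] [NormedSpace ℝ F] {f : ℝ × ℝ → F} {x t : ℝ}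

theorem hasDerivAt_partial_fst (hf : DifferentiableAt ℝ f (x, t)) :
    HasDerivAt (fun y => f (y, t)) (fderiv ℝ f (x, t) (1, 0)) x :=
  hf.hasFDerivAt.comp_hasDerivAt x ((hasDerivAt_id x).prodMk (hasDerivAt_const x t))

theorem hasDerivAt_partial_snd (hf : DifferentiableAt ℝ f (x, t)) :
    HasDerivAt (fun s => f (x, s)) (fderiv ℝ f (x, t) (0, 1)) t :=
  hf.hasFDerivAt.comp_hasDerivAt t ((hasDerivAt_const t x).prodMk (hasDerivAt_id t))

theorem deriv_deriv_partial_fst (hf : ContDiff ℝ 2 f) :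
    deriv (fun y => deriv (fun y' => f (y', t)) y) x
      = fderiv ℝ (fderiv ℝ f) (x, t) (1, 0) (1, 0) := by
  have hf' : Differentiable ℝ (fderiv ℝ f) :=
    (hf.fderiv_right (m := 1) le_rfl).differentiable one_ne_zero
  have hfirst : (fun y => deriv (fun y' => f (y', t)) y) = fun y => fderiv ℝ f (y, t) (1, 0) :=
    funext fun y => (hasDerivAt_partial_fst ((hf.differentiable two_ne_zero) _)).deriv
  rw [hfirst]
  exact ((hasDerivAt_partial_fst (hf' _)).clm_apply (hasDerivAt_const x _)).deriv.trans (by simp)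

theorem deriv_deriv_partial_snd (hf : ContDiff ℝ 2 f) :
    deriv (fun s => deriv (fun s' => f (x, s')) s) t
      = fderiv ℝ (fderiv ℝ f) (x, t) (0, 1) (0, 1) := by
  have hf' : Differentiable ℝ (fderiv ℝ f) :=
    (hf.fderiv_right (m := 1) le_rfl).differentiable one_ne_zero
  have hfirst : (fun s => deriv (fun s' => f (x, s')) s) = fun s => fderiv ℝ f (x, s) (0, 1) :=
    funext fun s => (hasDerivAt_partial_snd ((hf.differentiable two_ne_zero) _)).deriv
  rw [hfirst]
  exact ((hasDerivAt_partial_snd (hf' _)).clm_apply (hasDerivAt_const t _)).deriv.trans (by simp)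

end Partials

section Characteristics

variable {f : ℝ × ℝ → ℝ} {K : Set (ℝ × ℝ)}

-- If `f_tt = f_xx`, then `D²f z (a, b) (c, d) = (a c + b d) f_xx + (a d + b c) f_xt`.
theorem fderiv_fderiv_null_eq_zero (hf : ContDiff ℝ 2 f) {z : ℝ × ℝ}
    (hwave : fderiv ℝ (fderiv ℝ f) z (0, 1) (0, 1) = fderiv ℝ (fderiv ℝ f) z (1, 0) (1, 0))
    {a b c d : ℝ} (h₁ : a * c + b * d = 0) (h₂ : a * d + b * c = 0) :
    fderiv ℝ (fderiv ℝ f) z (a, b) (c, d) = 0 := by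
  have hsymm := hf.contDiffAt.isSymmSndFDerivAt (x := z) (by simp)
  rw [ContinuousLinearMap.apply_prod_eq (fderiv ℝ (fderiv ℝ f) z), add_apply,
    smul_apply, smul_apply,
    ContinuousLinearMap.apply_prod_eq (fderiv ℝ (fderiv ℝ f) z (1, 0)),
    ContinuousLinearMap.apply_prod_eq (fderiv ℝ (fderiv ℝ f) z (0, 1)), hsymm (0, 1) (1, 0),
    hwave]
  simp only [smul_eq_mul]
  linear_combination (fderiv ℝ (fderiv ℝ f) z (1, 0) (1, 0)) * h₁
    + (fderiv ℝ (fderiv ℝ f) z (1, 0) (0, 1)) * h₂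

theorem fderiv_apply_eq_of_null_segment (hf : ContDiff ℝ 2 f) {p q w : ℝ × ℝ}
    (hwave : ∀ z ∈ segment ℝ p q,
      fderiv ℝ (fderiv ℝ f) z (0, 1) (0, 1) = fderiv ℝ (fderiv ℝ f) z (1, 0) (1, 0))
    (h₁ : (q - p).1 * w.1 + (q - p).2 * w.2 = 0) (h₂ : (q - p).1 * w.2 + (q - p).2 * w.1 = 0) :
    fderiv ℝ f q w = fderiv ℝ f p w := by
  have hf' : Differentiable ℝ (fderiv ℝ f) :=
    (hf.fderiv_right (m := 1) le_rfl).differentiable one_ne_zero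
  exact eq_of_hasFDerivAt_of_apply_sub_eq_zero
    (f' := fun z => (ContinuousLinearMap.apply ℝ ℝ w).comp (fderiv ℝ (fderiv ℝ f) z))
    (fun z _ => (ContinuousLinearMap.apply ℝ ℝ w).hasFDerivAt.comp z (hf' z).hasFDerivAt)
    fun z hz => fderiv_fderiv_null_eq_zero hf (hwave z hz) h₁ h₂

theorem fderiv_apply_one_one_eq_of_add_eq (hf : ContDiff ℝ 2 f) (hK : Convex ℝ K)
    (hwave : ∀ z ∈ K,
      fderiv ℝ (fderiv ℝ f) z (0, 1) (0, 1) = fderiv ℝ (fderiv ℝ f) z (1, 0) (1, 0))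
    {p q : ℝ × ℝ} (hp : p ∈ K) (hq : q ∈ K) (h : p.1 + p.2 = q.1 + q.2) :
    fderiv ℝ f p (1, 1) = fderiv ℝ f q (1, 1) :=
  (fderiv_apply_eq_of_null_segment hf (fun z hz => hwave z (hK.segment_subset hp hq hz))
    (by simp only [Prod.fst_sub, Prod.snd_sub]; linarith)
    (by simp only [Prod.fst_sub, Prod.snd_sub]; linarith)).symm

theorem fderiv_apply_neg_one_one_eq_of_sub_eq (hf : ContDiff ℝ 2 f) (hK : Convex ℝ K)
    (hwave : ∀ z ∈ K,
      fderiv ℝ (fderiv ℝ f) z (0, 1) (0, 1) = fderiv ℝ (fderiv ℝ f) z (1, 0) (1, 0))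
    {p q : ℝ × ℝ} (hp : p ∈ K) (hq : q ∈ K) (h : p.1 - p.2 = q.1 - q.2) :
    fderiv ℝ f p (-1, 1) = fderiv ℝ f q (-1, 1) :=
  (fderiv_apply_eq_of_null_segment hf (fun z hz => hwave z (hK.segment_subset hp hq hz))
    (by simp only [Prod.fst_sub, Prod.snd_sub]; linarith)
    (by simp only [Prod.fst_sub, Prod.snd_sub]; linarith)).symm

end Characteristics

def trapezoid (k T : ℝ) : Set (ℝ × ℝ) :=
  {p | 0 < p.2 ∧ p.2 < T ∧ 0 ≤ p.1 ∧ p.1 ≤ 1 + k * p.2}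

section Trapezoid

variable {k T : ℝ}

theorem convex_trapezoid : Convex ℝ (trapezoid k T) := by
  rintro p ⟨hp0, hpT, hp1, hp2⟩ q ⟨hq0, hqT, hq1, hq2⟩ a b ha hb hab
  refine ⟨convex_Ioi (0 : ℝ) hp0 hq0 ha hb hab, convex_Iio T hpT hqT ha hb hab, ?_, ?_⟩ <;>
    simp only [Prod.fst_add, Prod.snd_add, Prod.smul_fst, Prod.smul_snd, smul_eq_mul]
  · positivity
  · nlinarith

theorem mk_zero_mem_trapezoid (hk : 0 ≤ k) {s : ℝ} (hs : s ∈ Ioo 0 T) :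
    ((0 : ℝ), s) ∈ trapezoid k T :=
  ⟨hs.1, hs.2, le_rfl, by nlinarith [hs.1]⟩

theorem mk_one_add_mul_mem_trapezoid (hk : 0 ≤ k) {s : ℝ} (hs : s ∈ Ioo 0 T) :
    (1 + k * s, s) ∈ trapezoid k T :=
  ⟨hs.1, hs.2, by nlinarith [hs.1], le_rfl⟩

theorem fderiv_fderiv_wave_of_mem_trapezoid {f : ℝ × ℝ → ℝ} (hf : ContDiff ℝ 2 f)
    (hk : 0 ≤ k)
    (hwave : ∀ x t : ℝ, 0 < t → t < T → 0 < x → x < 1 + k * t →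
      deriv (fun s => deriv (fun s' => f (x, s')) s) t
        = deriv (fun y => deriv (fun y' => f (y', t)) y) x) :
    ∀ z ∈ trapezoid k T,
      fderiv ℝ (fderiv ℝ f) z (0, 1) (0, 1) = fderiv ℝ (fderiv ℝ f) z (1, 0) (1, 0) := by
  rintro ⟨x, t⟩ ⟨ht0, htT, hx0, hx1⟩
  have hcont : Continuous (fderiv ℝ (fderiv ℝ f)) :=
    (hf.fderiv_right (m := 1) le_rfl).continuous_fderiv one_ne_zero
  have hclosed : IsClosed {y : ℝ | fderiv ℝ (fderiv ℝ f) (y, t) (0, 1) (0, 1)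
      = fderiv ℝ (fderiv ℝ f) (y, t) (1, 0) (1, 0)} := by
    apply isClosed_eq <;> fun_prop
  have hIoo : Ioo 0 (1 + k * t) ⊆ {y : ℝ | fderiv ℝ (fderiv ℝ f) (y, t) (0, 1) (0, 1)
      = fderiv ℝ (fderiv ℝ f) (y, t) (1, 0) (1, 0)} := fun y hy =>
    (deriv_deriv_partial_snd hf).symm.trans
      ((hwave y t ht0 htT hy.1 hy.2).trans (deriv_deriv_partial_fst hf))
  refine closure_minimal hIoo hclosed ?_
  rw [closure_Ioo (by nlinarith)]
  exact ⟨hx0, hx1⟩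

end Trapezoid

theorem riemannInvariants_eq_zero {k T : ℝ} {P Q : ℝ × ℝ → ℝ} (hk0 : 0 < k) (hk1 : k < 1)
    (hT : 2 < (1 - k) * T)
    (hP : ∀ p ∈ trapezoid k T, ∀ q ∈ trapezoid k T, p.1 + p.2 = q.1 + q.2 → P p = P q)
    (hQ : ∀ p ∈ trapezoid k T, ∀ q ∈ trapezoid k T, p.1 - p.2 = q.1 - q.2 → Q p = Q q)
    (hP₀ : ∀ s ∈ Ioo 0 T, P (0, s) = 0) (hQ₀ : ∀ s ∈ Ioo 0 T, Q (0, s) = 0)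
    (hPQ : ∀ s ∈ Ioo 0 T, (1 + k) * P (1 + k * s, s) + (1 - k) * Q (1 + k * s, s) = 0) :
    ∀ p ∈ trapezoid k T, P p = 0 ∧ Q p = 0 := by
  have hfixed := fun {s} (hs : s ∈ Ioo 0 T) => mk_zero_mem_trapezoid (k := k) hk0.le hs
  have hmoving := fun {s} (hs : s ∈ Ioo 0 T) => mk_one_add_mul_mem_trapezoid (k := k) hk0.le hs
  have hQ_of_lt : ∀ p ∈ trapezoid k T, p.1 < p.2 → Q p = 0 := fun p hp hlt => by
    have hs : p.2 - p.1 ∈ Ioo 0 T := ⟨by linarith, by linarith [hp.2.1, hp.2.2.1]⟩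
    rw [hQ p hp _ (hfixed hs) (by ring), hQ₀ _ hs]
  have hP_of_lt : ∀ p ∈ trapezoid k T, p.1 + p.2 < T → P p = 0 := fun p hp hlt => by
    have hs : p.1 + p.2 ∈ Ioo 0 T := ⟨by linarith [hp.1, hp.2.2.1], hlt⟩
    rw [hP p hp _ (hfixed hs) (by ring), hP₀ _ hs]
  have hQ_all : ∀ p ∈ trapezoid k T, Q p = 0 := by
    intro p hp
    have ⟨hp0, hpT, hp1, hp2⟩ := hp
    rcases lt_or_ge p.1 p.2 with hlt | hge
    · exact hQ_of_lt p hp hlt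
    -- the characteristic `x - t = p.1 - p.2` meets the moving endpoint at time `s`
    obtain ⟨s, hs⟩ : ∃ s, (1 - k) * s = 1 + p.2 - p.1 :=
      ⟨_, mul_div_cancel₀ _ (by linarith)⟩
    have hsI : s ∈ Ioo 0 T := ⟨by nlinarith, by nlinarith⟩
    have hPs : P (1 + k * s, s) = 0 := hP_of_lt _ (hmoving hsI) (by nlinarith)
    have hQs : Q (1 + k * s, s) = 0 := by nlinarith [hPQ s hsI]
    rw [hQ p hp _ (hmoving hsI) (by linarith), hQs]
  refine fun p hp => ⟨?_, hQ_all p hp⟩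
  have ⟨hp0, hpT, hp1, hp2⟩ := hp
  rcases lt_or_ge (p.1 + p.2) T with hlt | hge
  · exact hP_of_lt p hp hlt
  -- the characteristic `x + t = p.1 + p.2` meets the moving endpoint at time `s`
  obtain ⟨s, hs⟩ : ∃ s, (1 + k) * s = p.1 + p.2 - 1 :=
    ⟨_, mul_div_cancel₀ _ (by linarith)⟩
  have hsI : s ∈ Ioo 0 T := ⟨by nlinarith, by nlinarith⟩
  have hPs : P (1 + k * s, s) = 0 := by nlinarith [hPQ s hsI, hQ_all _ (hmoving hsI)]
  rw [hP p hp _ (hmoving hsI) (by linarith), hPs]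

theorem two_lt_one_sub_mul_of_exp_sub_one_div_lt {k T : ℝ} (hk0 : 0 < k) (hk1 : k < 1)
    (hT : (Real.exp (2 * k * (1 + k) / (1 - k) ^ 3) - 1) / k < T) : 2 < (1 - k) * T := by
  have h1k : 0 < 1 - k := by linarith
  have hexp := Real.add_one_lt_exp (by positivity : 2 * k * (1 + k) / (1 - k) ^ 3 ≠ 0)
  rw [div_lt_iff₀ hk0] at hT
  have h : 2 * (1 + k) < (1 - k) ^ 3 * T := by
    have : 2 * k * (1 + k) / (1 - k) ^ 3 < T * k := by linarith
    rw [div_lt_iff₀ (by positivity)] at this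
    nlinarith
  nlinarith [mul_pos h1k h1k]

theorem fderiv_eq_zero_of_mem_trapezoid {k T : ℝ} {f : ℝ × ℝ → ℝ} (hf : ContDiff ℝ 2 f)
    (hk0 : 0 < k) (hk1 : k < 1) (hT : 2 < (1 - k) * T)
    (hwave : ∀ z ∈ trapezoid k T,
      fderiv ℝ (fderiv ℝ f) z (0, 1) (0, 1) = fderiv ℝ (fderiv ℝ f) z (1, 0) (1, 0))
    (hfixed : ∀ s ∈ Ioo 0 T, fderiv ℝ f (0, s) = 0)
    (hmoving : ∀ s ∈ Ioo 0 T, fderiv ℝ f (1 + k * s, s) (k, 1) = 0) :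
    ∀ z ∈ trapezoid k T, fderiv ℝ f z = 0 := by
  have hinvariants := riemannInvariants_eq_zero (P := fun z => fderiv ℝ f z (1, 1))
    (Q := fun z => fderiv ℝ f z (-1, 1)) hk0 hk1 hT
    (fun _ hp _ hq => fderiv_apply_one_one_eq_of_add_eq hf convex_trapezoid hwave hp hq)
    (fun _ hp _ hq => fderiv_apply_neg_one_one_eq_of_sub_eq hf convex_trapezoid hwave hp hq)
    (fun s hs => by rw [hfixed s hs, zero_apply]) (fun s hs => by rw [hfixed s hs, zero_apply])
    (fun s hs => by
      rw [ContinuousLinearMap.one_add_mul_apply_add_one_sub_mul_apply, hmoving s hs, mul_zero])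
  exact fun z hz => ContinuousLinearMap.eq_zero_of_apply_one_one_of_apply_neg_one_one _
    (hinvariants z hz).1 (hinvariants z hz).2

theorem holmgren_unique_continuation_moving_boundary_general
    (k T : ℝ) (hk0 : 0 < k) (hk1 : k < 1)
    (hT : T > (Real.exp (2 * k * (1 + k) / (1 - k) ^ 3) - 1) / k)
    (φ : ℝ → ℝ → ℝ)
    (hreg : ContDiff ℝ 2 (fun p : ℝ × ℝ => φ p.1 p.2))
    (hwave : ∀ x t : ℝ, 0 < t → t < T → 0 < x → x < 1 + k * t →
      deriv (fun s => deriv (fun s' => φ x s') s) t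
        = deriv (fun y => deriv (fun y' => φ y' t) y) x)
    (hdir0 : ∀ t ∈ Set.Icc (0 : ℝ) T, φ 0 t = 0)
    (hdir1 : ∀ t ∈ Set.Icc (0 : ℝ) T, φ (1 + k * t) t = 0)
    (hneu : ∀ t ∈ Set.Ioo (0 : ℝ) T, deriv (fun y => φ y t) 0 = 0) :
    ∀ x t : ℝ, 0 < t → t < T → 0 < x → x < 1 + k * t → φ x t = 0 := by
  set Φ : ℝ × ℝ → ℝ := fun p => φ p.1 p.2
  have hΦ : Differentiable ℝ Φ := hreg.differentiable two_ne_zero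
  have hfixed : ∀ s ∈ Ioo 0 T, fderiv ℝ Φ (0, s) = 0 := fun s hs =>
    ContinuousLinearMap.eq_zero_of_apply_one_zero_of_apply_zero_one _
      ((hasDerivAt_partial_fst (hΦ _)).deriv.symm.trans (hneu s hs))
      ((hasDerivAt_partial_snd (hΦ _)).eq_zero_of_eqOn_Ioo hs
        fun u hu => hdir0 u (Ioo_subset_Icc_self hu))
  have hmoving : ∀ s ∈ Ioo 0 T, fderiv ℝ Φ (1 + k * s, s) (k, 1) = 0 := fun s hs => by
    have hcurve : HasDerivAt (fun u => (1 + k * u, u)) (k, (1 : ℝ)) s := by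
      simpa using (((hasDerivAt_id s).const_mul k).const_add 1).prodMk (hasDerivAt_id s)
    exact ((hΦ _).hasFDerivAt.comp_hasDerivAt s hcurve).eq_zero_of_eqOn_Ioo hs
      fun u hu => hdir1 u (Ioo_subset_Icc_self hu)
  have hzero := fderiv_eq_zero_of_mem_trapezoid hreg hk0 hk1
    (two_lt_one_sub_mul_of_exp_sub_one_div_lt hk0 hk1 hT)
    (fderiv_fderiv_wave_of_mem_trapezoid hreg hk0.le hwave) hfixed hmoving
  intro x t ht0 htT hx0 hx1
  have hseg := convex_trapezoid.segment_subset (mk_zero_mem_trapezoid hk0.le ⟨ht0, htT⟩)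
    (show (x, t) ∈ trapezoid k T from ⟨ht0, htT, hx0.le, hx1.le⟩)
  calc φ x t = Φ (0, t) := eq_of_hasFDerivAt_of_apply_sub_eq_zero (fun z _ => (hΦ z).hasFDerivAt)
        fun z hz => by rw [hzero z (hseg hz), zero_apply]
    _ = 0 := hdir0 t ⟨ht0.le, htT.le⟩

/-- Holmgren-type unique continuation from the fixed endpoint for
the wave equation on the non-cylindrical domain
`Q̂ = {(x,t) : 0 < t < T, 0 < x < 1 + k t}`, with `0 < k < 1` and
`T > (exp(2k(1+k)/(1−k)³) − 1)/k`. Here `φ x t` denotes `φ(x, t)`. -/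
theorem holmgren_unique_continuation_moving_boundary
    (k T : ℝ) (hk0 : 0 < k) (hk1 : k < 1) (hT0 : 0 < T)
    (hT : T > (Real.exp (2 * k * (1 + k) / (1 - k) ^ 3) - 1) / k)
    (φ : ℝ → ℝ → ℝ)
    (hreg : ContDiff ℝ 2 (fun p : ℝ × ℝ => φ p.1 p.2))
    (hwave : ∀ x t : ℝ, 0 < t → t < T → 0 < x → x < 1 + k * t →
      deriv (fun s => deriv (fun s' => φ x s') s) t
        = deriv (fun y => deriv (fun y' => φ y' t) y) x)
    (hdir0 : ∀ t ∈ Set.Icc (0 : ℝ) T, φ 0 t = 0)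
    (hdir1 : ∀ t ∈ Set.Icc (0 : ℝ) T, φ (1 + k * t) t = 0)
    (hneu : ∀ t ∈ Set.Ioo (0 : ℝ) T, deriv (fun y => φ y t) 0 = 0) :
    ∀ x t : ℝ, 0 < t → t < T → 0 < x → x < 1 + k * t → φ x t = 0 :=
  holmgren_unique_continuation_moving_boundary_general k T hk0 hk1 hT φ hreg hwave hdir0 hdir1 hneu
end

section
/- Fix 0 < k < 1 and T > 0, let α_k(t) = 1 + k t, and let Q̂ = {(x,t) ∈ ℝ² : 0 < t < T, 0 < x < α_k(t)}. Let u : ℝ² → ℝ be of class C². If u satisfies ∂²u/∂t² (x,t) = ∂²u/∂x² (x,t) for all (x,t) ∈ Q̂, the boundary conditions u(0,t) = 0 and u(α_k(t), t) = 0 for all t ∈ [0,T], and the zero initial conditions u(x,0) = 0 and ∂u/∂t (x,0) = 0 for all x ∈ [0,1], then u(x,t) = 0 for all (x,t) ∈ Q̂. -/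
/-!
The energy `E(t) = ∫₀^{1+kt} (u_x² + u_t²) dx` obeys the conservation law
`∂ₜ(u_x² + u_t²) = 2 ∂ₓ(u_x u_t)`. Differentiating the boundary conditions gives `u_t = 0` at
`x = 0` and `u_t + k u_x = 0` at `x = 1 + kt`, hence `E'(t) = -k (1 - k²) u_x(1 + kt, t)² ≤ 0`.
As `E ≥ 0` and `E(0) = 0`, the energy vanishes, so `u_x = 0` in the domain and `u = u(0, t) = 0`.
-/

open Set Filter Topology MeasureTheory intervalIntegral

section DirDeriv

variable {E : Type*} [NormedAddCommGroup E] [NormedSpace ℝ E] {f g : E → ℝ} {v p : E}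

noncomputable def dirDeriv (f : E → ℝ) (v p : E) : ℝ := fderiv ℝ f p v

lemma ContDiff.dirDeriv {m n : WithTop ℕ∞} (hf : ContDiff ℝ n f) (hmn : m + 1 ≤ n) (v : E) :
    ContDiff ℝ m (dirDeriv f v) :=
  (hf.fderiv_right hmn).clm_apply contDiff_const

lemma ContDiff.continuous_dirDeriv {X : Type*} [TopologicalSpace X] (hf : ContDiff ℝ 1 f)
    {v p : X → E} (hv : Continuous v) (hp : Continuous p) :
    Continuous fun x => _root_.dirDeriv f (v x) (p x) :=
  ((hf.continuous_fderiv one_ne_zero).comp hp).clm_apply hv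

lemma hasDerivAt_comp_dirDeriv {γ : ℝ → E} {s : ℝ} (hf : DifferentiableAt ℝ f (γ s))
    (hγ : HasDerivAt γ v s) : HasDerivAt (fun r => f (γ r)) (dirDeriv f v (γ s)) s :=
  hf.hasFDerivAt.comp_hasDerivAt s hγ

lemma dirDeriv_eq_zero_of_comp_eventually_eq_zero {γ : ℝ → E} {s : ℝ}
    (hf : DifferentiableAt ℝ f (γ s)) (hγ : HasDerivAt γ v s) (h : ∀ᶠ r in 𝓝 s, f (γ r) = 0) :
    dirDeriv f v (γ s) = 0 :=
  (hasDerivAt_comp_dirDeriv hf hγ).unique ((hasDerivAt_const s (0 : ℝ)).congr_of_eventuallyEq h)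

lemma dirDeriv_add (hf : DifferentiableAt ℝ f p) (hg : DifferentiableAt ℝ g p) :
    dirDeriv (f + g) v p = dirDeriv f v p + dirDeriv g v p := by
  simp [dirDeriv, fderiv_add hf hg]

lemma dirDeriv_mul (hf : DifferentiableAt ℝ f p) (hg : DifferentiableAt ℝ g p) :
    dirDeriv (f * g) v p = f p * dirDeriv g v p + g p * dirDeriv f v p := by
  simp [dirDeriv, fderiv_mul hf hg]

lemma dirDeriv_dirDeriv {w : E} (hf : DifferentiableAt ℝ (fderiv ℝ f) p) :
    dirDeriv (dirDeriv f v) w p = fderiv ℝ (fderiv ℝ f) p w v := by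
  change fderiv ℝ (fun q => fderiv ℝ f q v) p w = _
  simp [fderiv_clm_apply hf (differentiableAt_const v)]

lemma dirDeriv_comm (hf : ContDiff ℝ 2 f) (v w p : E) :
    dirDeriv (dirDeriv f v) w p = dirDeriv (dirDeriv f w) v p := by
  have hf' : Differentiable ℝ (fderiv ℝ f) :=
    (hf.fderiv_right (by norm_num)).differentiable one_ne_zero
  rw [dirDeriv_dirDeriv (hf' p), dirDeriv_dirDeriv (hf' p)]
  exact hf.contDiffAt.isSymmSndFDerivAt (by simp) w v

end DirDeriv

section Plane

variable {f : ℝ × ℝ → ℝ}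

lemma dirDeriv_pair (f : ℝ × ℝ → ℝ) (a b : ℝ) (p : ℝ × ℝ) :
    dirDeriv f (a, b) p = a * dirDeriv f (1, 0) p + b * dirDeriv f (0, 1) p := by
  have : ((a, b) : ℝ × ℝ) = a • ((1 : ℝ), (0 : ℝ)) + b • ((0 : ℝ), (1 : ℝ)) := by simp
  simp only [dirDeriv, this, map_add, map_smul, smul_eq_mul]

lemma hasDerivAt_dirDeriv_fst {x t : ℝ} (hf : DifferentiableAt ℝ f (x, t)) :
    HasDerivAt (fun y => f (y, t)) (dirDeriv f (1, 0) (x, t)) x :=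
  hasDerivAt_comp_dirDeriv hf ((hasDerivAt_id x).prodMk (hasDerivAt_const x t))

lemma hasDerivAt_dirDeriv_snd {x t : ℝ} (hf : DifferentiableAt ℝ f (x, t)) :
    HasDerivAt (fun s => f (x, s)) (dirDeriv f (0, 1) (x, t)) t :=
  hasDerivAt_comp_dirDeriv hf ((hasDerivAt_const t x).prodMk (hasDerivAt_id t))

lemma deriv_deriv_fst_eq_dirDeriv (hf : ContDiff ℝ 2 f) (x t : ℝ) :
    deriv (fun y => deriv (fun y' => f (y', t)) y) x =
      dirDeriv (dirDeriv f (1, 0)) (1, 0) (x, t) := by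
  have hf' : (fun y => deriv (fun y' => f (y', t)) y) = fun y => dirDeriv f (1, 0) (y, t) :=
    funext fun y => (hasDerivAt_dirDeriv_fst (hf.differentiable two_ne_zero _)).deriv
  rw [hf']
  exact (hasDerivAt_dirDeriv_fst
    ((hf.dirDeriv (m := 1) (by norm_num) _).differentiable one_ne_zero _)).deriv

lemma deriv_deriv_snd_eq_dirDeriv (hf : ContDiff ℝ 2 f) (x t : ℝ) :
    deriv (fun s => deriv (fun s' => f (x, s')) s) t =
      dirDeriv (dirDeriv f (0, 1)) (0, 1) (x, t) := by
  have hf' : (fun s => deriv (fun s' => f (x, s')) s) = fun s => dirDeriv f (0, 1) (x, s) :=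
    funext fun s => (hasDerivAt_dirDeriv_snd (hf.differentiable two_ne_zero _)).deriv
  rw [hf']
  exact (hasDerivAt_dirDeriv_snd
    ((hf.dirDeriv (m := 1) (by norm_num) _).differentiable one_ne_zero _)).deriv

end Plane

lemma hasDerivAt_intervalIntegral_of_continuous_deriv {E : Type*} [NormedAddCommGroup E]
    [NormedSpace ℝ E] {G G' : ℝ → ℝ → E} {a b t₀ : ℝ}
    (hG : Continuous fun q : ℝ × ℝ => G q.1 q.2) (hG' : Continuous fun q : ℝ × ℝ => G' q.1 q.2)
    (hderiv : ∀ t y, HasDerivAt (G · y) (G' t y) t) :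
    HasDerivAt (fun t => ∫ y in a..b, G t y) (∫ y in a..b, G' t₀ y) t₀ := by
  obtain ⟨C, hC⟩ := (isCompact_Icc.prod isCompact_uIcc :
    IsCompact (Icc (t₀ - 1) (t₀ + 1) ×ˢ uIcc a b)).exists_bound_of_continuousOn hG'.continuousOn
  have hGt : ∀ t, Continuous (G t) := fun t => hG.comp (Continuous.prodMk_right t)
  refine (hasDerivAt_integral_of_dominated_loc_of_deriv_le (bound := fun _ => C)
    (Metric.ball_mem_nhds t₀ one_pos) (.of_forall fun t => (hGt t).aestronglyMeasurable)
    ((hGt t₀).intervalIntegrable a b) (hG'.comp (Continuous.prodMk_right t₀)).aestronglyMeasurable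
    ?_ intervalIntegrable_const (.of_forall fun y _ t _ => hderiv t y)).2
  refine .of_forall fun y hy t ht => hC (t, y) ⟨?_, uIoc_subset_uIcc hy⟩
  rw [Metric.mem_ball, Real.dist_eq, abs_sub_lt_iff] at ht
  constructor <;> linarith

lemma eqOn_zero_of_integral_eq_zero {f : ℝ → ℝ} {a b : ℝ} (hab : a ≤ b) (hf : Continuous f)
    (hf₀ : ∀ x ∈ Ioc a b, 0 ≤ f x) (h : ∫ x in a..b, f x = 0) : EqOn f 0 (Ioo a b) := by
  have hae := (integral_eq_zero_iff_of_le_of_nonneg_ae hab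
    (ae_restrict_of_forall_mem measurableSet_Ioc hf₀) (hf.intervalIntegrable a b)).1 h
  exact Measure.eqOn_open_of_ae_eq (ae_restrict_of_ae_restrict_of_subset Ioo_subset_Ioc_self hae)
    isOpen_Ioo hf.continuousOn continuousOn_const

section Energy

variable {F : ℝ × ℝ → ℝ} {k t : ℝ}

noncomputable def energyDensity (F : ℝ × ℝ → ℝ) : ℝ × ℝ → ℝ :=
  dirDeriv F (1, 0) * dirDeriv F (1, 0) + dirDeriv F (0, 1) * dirDeriv F (0, 1)

noncomputable def energyFlux (F : ℝ × ℝ → ℝ) : ℝ × ℝ → ℝ :=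
  dirDeriv F (1, 0) * dirDeriv F (0, 1)

lemma energyDensity_nonneg (F : ℝ × ℝ → ℝ) (p : ℝ × ℝ) : 0 ≤ energyDensity F p :=
  add_nonneg (mul_self_nonneg _) (mul_self_nonneg _)

lemma ContDiff.energyDensity {m n : WithTop ℕ∞} (hF : ContDiff ℝ n F) (hmn : m + 1 ≤ n) :
    ContDiff ℝ m (energyDensity F) :=
  have hP := hF.dirDeriv hmn (1, 0)
  have hQ := hF.dirDeriv hmn (0, 1)
  (hP.mul hP).add (hQ.mul hQ)

lemma ContDiff.energyFlux {m n : WithTop ℕ∞} (hF : ContDiff ℝ n F) (hmn : m + 1 ≤ n) :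
    ContDiff ℝ m (energyFlux F) :=
  (hF.dirDeriv hmn (1, 0)).mul (hF.dirDeriv hmn (0, 1))

lemma dirDeriv_energyDensity_snd (hF : ContDiff ℝ 2 F) {p : ℝ × ℝ}
    (hwave : dirDeriv (dirDeriv F (0, 1)) (0, 1) p = dirDeriv (dirDeriv F (1, 0)) (1, 0) p) :
    dirDeriv (energyDensity F) (0, 1) p = 2 * dirDeriv (energyFlux F) (1, 0) p := by
  have hP := (hF.dirDeriv (m := 1) (by norm_num) (1, 0)).differentiable one_ne_zero p
  have hQ := (hF.dirDeriv (m := 1) (by norm_num) (0, 1)).differentiable one_ne_zero p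
  rw [energyDensity, energyFlux, dirDeriv_add (hP.mul hP) (hQ.mul hQ), dirDeriv_mul hP hP,
    dirDeriv_mul hQ hQ, dirDeriv_mul hP hQ, dirDeriv_comm hF (1, 0) (0, 1), hwave]
  ring

/-- `∫₀^{1+kt} energyDensity F (x, t) dx`, rescaled to the fixed interval `[0, 1]` so that it can
be differentiated under the integral sign. -/
noncomputable def energy (F : ℝ × ℝ → ℝ) (k t : ℝ) : ℝ :=
  ∫ y in (0 : ℝ)..1, (1 + k * t) * energyDensity F ((1 + k * t) * y, t)

lemma energy_nonneg (ht : 0 ≤ 1 + k * t) : 0 ≤ energy F k t :=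
  integral_nonneg zero_le_one fun _ _ => mul_nonneg ht (energyDensity_nonneg F _)

lemma hasDerivAt_energy (hF : ContDiff ℝ 2 F) (k t : ℝ) :
    HasDerivAt (energy F k) (∫ y in (0 : ℝ)..1, (k * energyDensity F ((1 + k * t) * y, t) +
      (1 + k * t) * dirDeriv (energyDensity F) (k * y, 1) ((1 + k * t) * y, t))) t := by
  have he := hF.energyDensity (m := 1) (by norm_num)
  have hde := he.continuous_dirDeriv (v := fun q : ℝ × ℝ => (k * q.2, 1))
    (p := fun q : ℝ × ℝ => ((1 + k * q.1) * q.2, q.1)) (by fun_prop) (by fun_prop)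
  refine hasDerivAt_intervalIntegral_of_continuous_deriv
    (G := fun t y => (1 + k * t) * energyDensity F ((1 + k * t) * y, t))
    (G' := fun t y => k * energyDensity F ((1 + k * t) * y, t) +
      (1 + k * t) * dirDeriv (energyDensity F) (k * y, 1) ((1 + k * t) * y, t))
    (by fun_prop) (by fun_prop) fun s y => ?_
  have ha : HasDerivAt (fun s => 1 + k * s) k s :=
    ((hasDerivAt_id' s).const_mul k).const_add 1 |>.congr_deriv (mul_one k)
  exact ha.mul (hasDerivAt_comp_dirDeriv (he.differentiable one_ne_zero _)
    ((ha.mul_const y).prodMk (hasDerivAt_id' s))) |>.congr_deriv (by ring)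

lemma hasDerivAt_energy_of_wave (hF : ContDiff ℝ 2 F) (ha : 0 < 1 + k * t)
    (hwave : ∀ x ∈ Ioo 0 (1 + k * t), dirDeriv (dirDeriv F (0, 1)) (0, 1) (x, t) =
      dirDeriv (dirDeriv F (1, 0)) (1, 0) (x, t)) :
    HasDerivAt (energy F k) (k * energyDensity F (1 + k * t, t) +
      2 * (energyFlux F (1 + k * t, t) - energyFlux F (0, t))) t := by
  convert hasDerivAt_energy hF k t using 1
  set a := 1 + k * t
  have he := hF.energyDensity (m := 1) (by norm_num)
  have hflux := hF.energyFlux (m := 1) (by norm_num)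
  have hγ : ∀ y : ℝ, HasDerivAt (fun y => (a * y, t)) (a, 0) y := fun y =>
    ((hasDerivAt_id' y).const_mul a |>.congr_deriv (mul_one a)).prodMk (hasDerivAt_const y t)
  have hΦ : ∀ y ∈ Ioo (0 : ℝ) 1,
      HasDerivAt (fun y => k * y * energyDensity F (a * y, t) + 2 * energyFlux F (a * y, t))
        (k * energyDensity F (a * y, t) + a * dirDeriv (energyDensity F) (k * y, 1) (a * y, t)) y := by
    intro y hy
    have h1 := hasDerivAt_comp_dirDeriv (he.differentiable one_ne_zero _) (hγ y)
    have h2 := hasDerivAt_comp_dirDeriv (hflux.differentiable one_ne_zero _) (hγ y)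
    refine (((hasDerivAt_id' y).const_mul k).mul h1 |>.add (h2.const_mul 2)).congr_deriv ?_
    have hx : a * y ∈ Ioo 0 a := ⟨mul_pos ha hy.1, mul_lt_of_lt_one_right ha hy.2⟩
    rw [dirDeriv_pair _ (k * y), dirDeriv_pair _ a 0, dirDeriv_pair _ a 0,
      dirDeriv_energyDensity_snd hF (hwave _ hx)]
    ring
  have := he.continuous_dirDeriv (v := fun y : ℝ => (k * y, 1)) (p := fun y => (a * y, t))
    (by fun_prop) (by fun_prop)
  have := he.continuous
  have := hflux.continuous
  rw [integral_eq_sub_of_hasDerivAt_of_le zero_le_one (by fun_prop) hΦ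
    (Continuous.intervalIntegrable (by fun_prop) _ _)]
  simp only [mul_one, mul_zero, zero_mul, zero_add]
  ring

lemma energy_antitoneOn (hF : ContDiff ℝ 2 F) (hk₀ : 0 ≤ k) (hk₁ : k ≤ 1) {T : ℝ}
    (hwave : ∀ t ∈ Ioo 0 T, ∀ x ∈ Ioo 0 (1 + k * t),
      dirDeriv (dirDeriv F (0, 1)) (0, 1) (x, t) = dirDeriv (dirDeriv F (1, 0)) (1, 0) (x, t))
    (hleft : ∀ t ∈ Ioo 0 T, dirDeriv F (0, 1) (0, t) = 0)
    (hright : ∀ t ∈ Ioo 0 T, dirDeriv F (k, 1) (1 + k * t, t) = 0) :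
    AntitoneOn (energy F k) (Icc 0 T) := by
  refine antitoneOn_of_hasDerivWithinAt_nonpos (convex_Icc 0 T)
    (fun t _ => (hasDerivAt_energy hF k t).continuousAt.continuousWithinAt)
    (fun t ht => (hasDerivAt_energy_of_wave hF ?_ (hwave t ?_)).hasDerivWithinAt) fun t ht => ?_
  · rw [interior_Icc] at ht
    exact add_pos_of_pos_of_nonneg one_pos (mul_nonneg hk₀ ht.1.le)
  · rwa [interior_Icc] at ht
  · rw [interior_Icc] at ht
    set P := dirDeriv F (1, 0) (1 + k * t, t)
    have hQ : dirDeriv F (0, 1) (1 + k * t, t) = -(k * P) := by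
      linarith [dirDeriv_pair F k 1 (1 + k * t, t) ▸ hright t ht]
    simp only [energyDensity, energyFlux, Pi.add_apply, Pi.mul_apply, hleft t ht, hQ]
    have : 0 ≤ k * (1 - k) * (1 + k) * (P * P) :=
      mul_nonneg (mul_nonneg (mul_nonneg hk₀ (sub_nonneg.2 hk₁)) (by linarith)) (mul_self_nonneg P)
    linarith

lemma energy_zero_eq_zero (hP : ∀ x ∈ Ioo 0 1, dirDeriv F (1, 0) (x, 0) = 0)
    (hQ : ∀ x ∈ Ioo 0 1, dirDeriv F (0, 1) (x, 0) = 0) : energy F k 0 = 0 := by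
  have he : EqOn (fun x => energyDensity F (x, 0)) 0 (Ioo 0 1) := fun x hx => by
    simp [energyDensity, hP x hx, hQ x hx]
  simp only [energy, mul_zero, add_zero, one_mul]
  rw [integral_of_le zero_le_one, integral_Ioc_eq_integral_Ioo,
    setIntegral_congr_fun measurableSet_Ioo he]
  simp

lemma eq_zero_of_energy_eq_zero (hF : ContDiff ℝ 1 F) (ha : 0 < 1 + k * t)
    (h : energy F k t = 0) (hleft : F (0, t) = 0) {x : ℝ} (hx : x ∈ Ioc 0 (1 + k * t)) :
    F (x, t) = 0 := by
  have := hF.energyDensity (m := 0) (by norm_num) |>.continuous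
  have hP : ∀ y ∈ Ioo 0 x, dirDeriv F (1, 0) (y, t) = 0 := by
    intro y hy
    have hzero := eqOn_zero_of_integral_eq_zero zero_le_one (by fun_prop)
      (fun y _ => mul_nonneg ha.le (energyDensity_nonneg F _)) h
      (x := y / (1 + k * t)) ⟨div_pos hy.1 ha, (div_lt_one ha).2 (hy.2.trans_le hx.2)⟩
    simp only [Pi.zero_apply, mul_div_cancel₀ _ ha.ne', mul_eq_zero, ha.ne', false_or,
      energyDensity, Pi.add_apply, Pi.mul_apply, mul_self_add_mul_self_eq_zero] at hzero
    exact hzero.1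
  have hconst := integral_eq_sub_of_hasDerivAt_of_le hx.1.le (f' := fun _ => 0)
    (hF.continuous.comp (Continuous.prodMk_left t)).continuousOn
    (fun y hy => (hasDerivAt_dirDeriv_fst (hF.differentiable one_ne_zero _)).congr_deriv (hP y hy))
    intervalIntegrable_const
  simp only [intervalIntegral.integral_zero, Function.comp_apply] at hconst
  linarith

end Energy

theorem wave_moving_boundary_zero_data_implies_zero_general
    (k T : ℝ) (hk0 : 0 < k) (hk1 : k < 1)
    (u : ℝ → ℝ → ℝ)
    (hreg : ContDiff ℝ 2 (fun p : ℝ × ℝ => u p.1 p.2))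
    (hwave : ∀ x t : ℝ, 0 < t → t < T → 0 < x → x < 1 + k * t →
      deriv (fun s => deriv (fun s' => u x s') s) t
        = deriv (fun y => deriv (fun y' => u y' t) y) x)
    (hdir0 : ∀ t ∈ Set.Icc (0 : ℝ) T, u 0 t = 0)
    (hdir1 : ∀ t ∈ Set.Icc (0 : ℝ) T, u (1 + k * t) t = 0)
    (hinit0 : ∀ x ∈ Set.Icc (0 : ℝ) 1, u x 0 = 0)
    (hinit1 : ∀ x ∈ Set.Icc (0 : ℝ) 1, deriv (fun s => u x s) 0 = 0) :
    ∀ x t : ℝ, 0 < t → t < T → 0 < x → x < 1 + k * t → u x t = 0 := by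
  intro x t ht0 htT hx0 hx1
  set F : ℝ × ℝ → ℝ := fun p => u p.1 p.2
  have hFd : Differentiable ℝ F := hreg.differentiable two_ne_zero
  have hwave' : ∀ s ∈ Ioo 0 t, ∀ y ∈ Ioo 0 (1 + k * s),
      dirDeriv (dirDeriv F (0, 1)) (0, 1) (y, s) = dirDeriv (dirDeriv F (1, 0)) (1, 0) (y, s) :=
    fun s hs y hy => (deriv_deriv_snd_eq_dirDeriv hreg y s).symm.trans
      ((hwave y s hs.1 (hs.2.trans htT) hy.1 hy.2).trans (deriv_deriv_fst_eq_dirDeriv hreg y s))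
  have hleft : ∀ s ∈ Ioo 0 t, dirDeriv F (0, 1) (0, s) = 0 := fun s hs =>
    dirDeriv_eq_zero_of_comp_eventually_eq_zero (γ := fun r => (0, r)) (hFd _)
      ((hasDerivAt_const s 0).prodMk (hasDerivAt_id' s))
      (eventually_of_mem (Icc_mem_nhds hs.1 (hs.2.trans htT)) hdir0)
  have hright : ∀ s ∈ Ioo 0 t, dirDeriv F (k, 1) (1 + k * s, s) = 0 := fun s hs =>
    dirDeriv_eq_zero_of_comp_eventually_eq_zero (γ := fun r => (1 + k * r, r)) (hFd _)
      ((((hasDerivAt_id' s).const_mul k).const_add 1 |>.congr_deriv (mul_one k)).prodMk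
        (hasDerivAt_id' s))
      (eventually_of_mem (Icc_mem_nhds hs.1 (hs.2.trans htT)) hdir1)
  have hP₀ : ∀ y ∈ Ioo 0 1, dirDeriv F (1, 0) (y, 0) = 0 := fun y hy =>
    dirDeriv_eq_zero_of_comp_eventually_eq_zero (γ := fun r => (r, 0)) (hFd _)
      ((hasDerivAt_id' y).prodMk (hasDerivAt_const y 0))
      (eventually_of_mem (Icc_mem_nhds hy.1 hy.2) hinit0)
  have hQ₀ : ∀ y ∈ Ioo 0 1, dirDeriv F (0, 1) (y, 0) = 0 := fun y hy =>
    (hasDerivAt_dirDeriv_snd (hFd _)).deriv ▸ hinit1 y (Ioo_subset_Icc_self hy)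
  have ha : 0 < 1 + k * t := by positivity
  have hE : energy F k t = 0 := le_antisymm
    ((energy_antitoneOn hreg hk0.le hk1.le hwave' hleft hright ⟨le_rfl, ht0.le⟩ ⟨ht0.le, le_rfl⟩
      ht0.le).trans_eq (energy_zero_eq_zero hP₀ hQ₀)) (energy_nonneg ha.le)
  exact eq_zero_of_energy_eq_zero (hreg.of_le one_le_two) ha hE (hdir0 t ⟨ht0.le, htT.le⟩)
    ⟨hx0, hx1.le⟩

/-- uniqueness (for classical solutions) of the homogeneous Dirichlet
initial-boundary value problem for the wave equation on the moving domain
`Q̂ = {(x,t) : 0 < t < T, 0 < x < 1 + k t}`, with `0 < k < 1`.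
Here `u x t` denotes `u(x, t)`. -/
theorem wave_moving_boundary_zero_data_implies_zero
    (k T : ℝ) (hk0 : 0 < k) (hk1 : k < 1) (hT0 : 0 < T)
    (u : ℝ → ℝ → ℝ)
    (hreg : ContDiff ℝ 2 (fun p : ℝ × ℝ => u p.1 p.2))
    (hwave : ∀ x t : ℝ, 0 < t → t < T → 0 < x → x < 1 + k * t →
      deriv (fun s => deriv (fun s' => u x s') s) t
        = deriv (fun y => deriv (fun y' => u y' t) y) x)
    (hdir0 : ∀ t ∈ Set.Icc (0 : ℝ) T, u 0 t = 0)
    (hdir1 : ∀ t ∈ Set.Icc (0 : ℝ) T, u (1 + k * t) t = 0)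
    (hinit0 : ∀ x ∈ Set.Icc (0 : ℝ) 1, u x 0 = 0)
    (hinit1 : ∀ x ∈ Set.Icc (0 : ℝ) 1, deriv (fun s => u x s) 0 = 0) :
    ∀ x t : ℝ, 0 < t → t < T → 0 < x → x < 1 + k * t → u x t = 0 :=
  wave_moving_boundary_zero_data_implies_zero_general k T hk0 hk1 u hreg hwave hdir0 hdir1 hinit0
    hinit1
end
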